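/- Let G be a cactus on n vertices and C an odd cycle of G of length |C|. Then Σ_{e ∈ E(C)} PI(e) = (n-2)(|C| - 1) - 2. -/

import Mathlib

/-!
In a cactus every vertex `w` has a gate `g(w)` on the cycle `C = x₀ … x_{k-1}`:
`d(w, xᵢ) = d(w, x_g) + d_C(g, i)`, where `d_C` is the distance along `C`. Indeed two different
first entry points of walks from `w` into `C`, or a path between two vertices of `C` leaving `C`,
would close a second cycle sharing two vertices with `C`; in particular `C` is isometric.
If `k = 2h + 1` is odd, `w` is equidistant from the ends of `xᵢxᵢ₊₁` exactly when `g(w) = i - h`,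
and every other vertex outside the edge is counted once in `PI(xᵢxᵢ₊₁)`. As these equidistant
sets partition the `n` vertices, `Σ PI = k(n - 2) - n = (n - 2)(k - 1) - 2`.
-/

open SimpleGraph Finset
open scoped Classical

variable {V : Type*}

/-- Number of vertices strictly closer to `x` than to `y` (excluding `x` and `y`). -/
noncomputable def nclose (G : SimpleGraph V) (x y : V) : ℕ :=
  Nat.card {w : V | w ≠ x ∧ w ≠ y ∧ G.dist w x < G.dist w y}

/-- The contribution `PI(e) = n_{xy}(x) + n_{xy}(y)` of an edge. -/
noncomputable def PIedge (G : SimpleGraph V) : Sym2 V → ℕ :=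
  Sym2.lift ⟨fun x y => nclose G x y + nclose G y x, fun _ _ => add_comm _ _⟩

/-- The vertex PI index of a graph. -/
noncomputable def PI [Fintype V] (G : SimpleGraph V) : ℕ :=
  ∑ e ∈ G.edgeFinset, PIedge G e

/-- A cactus: connected, and any two cycles share at most one vertex. -/
def IsCactus (G : SimpleGraph V) : Prop :=
  G.Connected ∧ ∀ (u v : V) (c₁ : G.Walk u u) (c₂ : G.Walk v v),
    c₁.IsCycle → c₂.IsCycle → {e | e ∈ c₁.edges} ≠ {e | e ∈ c₂.edges} →
    Set.ncard {x | x ∈ c₁.support ∧ x ∈ c₂.support} ≤ 1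


namespace ZMod

variable {k : ℕ}

lemma natCast_ne_zero_of_pos_of_lt {m : ℕ} (h0 : 0 < m) (hm : m < k) : (m : ZMod k) ≠ 0 := by
  rw [Ne, natCast_eq_zero_iff]
  exact fun hdvd => (Nat.le_of_dvd h0 hdvd).not_gt hm

lemma natAbs_valMinAbs_add_le_add (a b : ZMod k) :
    (a + b).valMinAbs.natAbs ≤ a.valMinAbs.natAbs + b.valMinAbs.natAbs :=
  (natAbs_valMinAbs_add_le a b).trans (Int.natAbs_add_le _ _)

lemma natAbs_valMinAbs_one_le : (1 : ZMod k).valMinAbs.natAbs ≤ 1 := by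
  rcases k with _ | k
  · rfl
  · rw [valMinAbs_natAbs_eq_min, val_one_eq_one_mod]
    exact (min_le_left _ _).trans (Nat.mod_le _ _)

lemma natAbs_valMinAbs_add_one_eq_iff {h : ℕ} (hk : k = 2 * h + 1) (u : ZMod k) :
    (u + 1).valMinAbs.natAbs = u.valMinAbs.natAbs ↔ u = h := by
  subst hk
  have hu := u.val_lt
  have hval : (u + 1).val = (u.val + 1) % (2 * h + 1) := by
    rw [val_add, val_one_eq_one_mod]
    simp
  rw [valMinAbs_natAbs_eq_min, valMinAbs_natAbs_eq_min, hval, ← val_injective _ |>.eq_iff,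
    val_natCast_of_lt (by omega)]
  rcases Nat.lt_or_ge (u.val + 1) (2 * h + 1) with hlt | hge
  · rw [Nat.mod_eq_of_lt hlt]; omega
  · rw [show u.val + 1 = 2 * h + 1 by omega, Nat.mod_self]; omega

end ZMod

namespace SimpleGraph.Walk

variable {G : SimpleGraph V} {v : V}

lemma exists_eq_append_first_mem {w u : V} (S : Set V) (p : G.Walk w u) (hu : u ∈ S) :
    ∃ y ∈ S, ∃ (q : G.Walk w y) (r : G.Walk y u),
      p = q.append r ∧ ∀ z ∈ q.support, z ∈ S → z = y := by
  induction p with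
  | nil => exact ⟨_, hu, nil, nil, rfl, by simp⟩
  | @cons w w' u hadj p ih =>
    by_cases hw : w ∈ S
    · exact ⟨w, hw, nil, cons hadj p, rfl, by simp⟩
    · obtain ⟨y, hy, q, r, rfl, hq⟩ := ih hu
      refine ⟨y, hy, cons hadj q, r, rfl, fun z hz hzS => ?_⟩
      rcases List.mem_cons.mp (support_cons hadj q ▸ hz) with rfl | hz
      · exact absurd hzS hw
      · exact hq z hz hzS

lemma notMem_edges_of_forall_mem_support_eq {u w x y z : V} {p : G.Walk u w} {q : G.Walk x y}
    (h : ∀ a ∈ p.support, a ∈ q.support → a = z) {e : Sym2 V} (hp : e ∈ p.edges) :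
    e ∉ q.edges := by
  induction e using Sym2.ind with
  | _ a b =>
  intro hq
  have ha := h a (p.fst_mem_support_of_mem_edges hp) (q.fst_mem_support_of_mem_edges hq)
  have hb := h b (p.snd_mem_support_of_mem_edges hp) (q.snd_mem_support_of_mem_edges hq)
  exact (p.adj_of_mem_edges hp).ne (ha.trans hb.symm)

lemma mk_mem_edges_of_length_eq_one {x y : V} {p : G.Walk x y} (hp : p.length = 1) :
    s(x, y) ∈ p.edges := by
  have hsnd : p.snd = y := by rw [snd, ← hp, getVert_length]
  simpa [hsnd] using mk_start_snd_mem_edges (p := p) (by rw [← length_eq_zero_iff]; omega)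

lemma exists_isPath_of_mem_support (c : G.Walk v v) {x y : V} (hx : x ∈ c.support)
    (hy : y ∈ c.support) :
    ∃ q : G.Walk x y, q.IsPath ∧ (∀ z ∈ q.support, z ∈ c.support) ∧
      ∀ e ∈ q.edges, e ∈ c.edges := by
  classical
  let q := (c.dropUntil x hx).append (c.takeUntil y hy)
  refine ⟨q.bypass, bypass_isPath q, fun z hz => ?_, fun e he => ?_⟩
  · rcases (mem_support_append_iff _ _).mp (support_bypass_subset_support q hz) with hz | hz
    · exact c.support_dropUntil_subset_support hx hz
    · exact c.support_takeUntil_subset_support hy hz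
  · have he := edges_bypass_subset_edges q he
    rw [edges_append, List.mem_append] at he
    rcases he with he | he
    · exact c.edges_dropUntil_subset_edges hx he
    · exact c.edges_takeUntil_subset_edges hy he

-- Indexing by `ZMod c.length` makes the distance along the cycle from `cycleVert i` to
-- `cycleVert j` equal to `(j - i).valMinAbs.natAbs`.
def cycleVert (c : G.Walk v v) (i : ZMod c.length) : V := c.getVert i.val

variable {c : G.Walk v v}

lemma IsCycle.neZero_length (hc : c.IsCycle) : NeZero c.length :=
  ⟨by have := hc.three_le_length; omega⟩

lemma IsCycle.self_ne_add_one (hc : c.IsCycle) (i : ZMod c.length) : i ≠ i + 1 := by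
  have := hc.three_le_length
  simpa [eq_comm] using ZMod.natCast_ne_zero_of_pos_of_lt (k := c.length) one_pos (by omega)

lemma IsCycle.cycleVert_injective (hc : c.IsCycle) : Function.Injective c.cycleVert := by
  have := hc.neZero_length
  intro i j hij
  have hi := i.val_lt
  have hj := j.val_lt
  exact ZMod.val_injective _ <| hc.getVert_injOn' (by simp; omega) (by simp; omega) hij

lemma cycleVert_natCast (hc : c.IsCycle) {n : ℕ} (hn : n ≤ c.length) :
    c.cycleVert n = c.getVert n := by
  have := hc.neZero_length
  rcases hn.lt_or_eq with hlt | rfl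
  · rw [cycleVert, ZMod.val_natCast_of_lt hlt]
  · rw [cycleVert, ZMod.natCast_self, ZMod.val_zero, getVert_zero, getVert_length]

lemma cycleVert_mem_support (i : ZMod c.length) : c.cycleVert i ∈ c.support :=
  c.getVert_mem_support _

lemma IsCycle.exists_cycleVert_eq (hc : c.IsCycle) {y : V} (hy : y ∈ c.support) :
    ∃ i, c.cycleVert i = y := by
  obtain ⟨n, rfl, hn⟩ := mem_support_iff_exists_getVert.mp hy
  exact ⟨n, cycleVert_natCast hc hn⟩

lemma IsCycle.mem_edges_iff (hc : c.IsCycle) {e : Sym2 V} :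
    e ∈ c.edges ↔ ∃ i, e = s(c.cycleVert i, c.cycleVert (i + 1)) := by
  have := hc.neZero_length
  rw [List.mem_iff_getElem]
  constructor
  · rintro ⟨n, hn, rfl⟩
    rw [length_edges] at hn
    refine ⟨n, ?_⟩
    rw [getElem_edges, cycleVert_natCast hc hn.le, ← Nat.cast_succ, cycleVert_natCast hc hn]
  · rintro ⟨i, rfl⟩
    refine ⟨i.val, by simpa using i.val_lt, ?_⟩
    rw [getElem_edges, ← cycleVert_natCast hc i.val_lt.le, ← cycleVert_natCast hc i.val_lt,
      Nat.cast_succ, ZMod.natCast_zmod_val]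

lemma IsCycle.adj_cycleVert (hc : c.IsCycle) (i : ZMod c.length) :
    G.Adj (c.cycleVert i) (c.cycleVert (i + 1)) :=
  c.adj_of_mem_edges (hc.mem_edges_iff.mpr ⟨i, rfl⟩)

lemma IsCycle.sum_edges_toFinset {M : Type*} [AddCommMonoid M] [NeZero c.length]
    (hc : c.IsCycle) (f : Sym2 V → M) :
    ∑ e ∈ c.edges.toFinset, f e = ∑ i, f s(c.cycleVert i, c.cycleVert (i + 1)) := by
  have hedges : c.edges.toFinset = univ.image fun i => s(c.cycleVert i, c.cycleVert (i + 1)) := by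
    ext e
    simp [hc.mem_edges_iff, eq_comm]
  rw [hedges, sum_image]
  intro i _ j _ hij
  rcases Sym2.eq_iff.mp hij with ⟨hi, -⟩ | ⟨hi, hj⟩
  · exact hc.cycleVert_injective hi
  · replace hi := hc.cycleVert_injective hi
    replace hj := hc.cycleVert_injective hj
    have h2 : ((2 : ℕ) : ZMod c.length) = 0 := by
      push_cast
      linear_combination hj - hi
    exact (ZMod.natCast_ne_zero_of_pos_of_lt two_pos hc.three_le_length h2).elim

lemma IsCycle.dist_cycleVert_add_natCast_le (hc : c.IsCycle) (i : ZMod c.length) (m : ℕ) :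
    G.dist (c.cycleVert i) (c.cycleVert (i + m)) ≤ m := by
  induction m with
  | zero => simp
  | succ m ih =>
    have hadj := hc.adj_cycleVert (i + m)
    calc G.dist (c.cycleVert i) (c.cycleVert (i + (m + 1 : ℕ)))
        ≤ G.dist (c.cycleVert i) (c.cycleVert (i + m)) +
            G.dist (c.cycleVert (i + m)) (c.cycleVert (i + m + 1)) := by
          rw [Nat.cast_succ, ← add_assoc]
          exact hadj.reachable.dist_triangle_right _
      _ ≤ m + 1 := by rw [dist_eq_one_iff_adj.mpr hadj]; omega

lemma IsCycle.dist_cycleVert_le (hc : c.IsCycle) (i j : ZMod c.length) :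
    G.dist (c.cycleVert i) (c.cycleVert j) ≤ (j - i).valMinAbs.natAbs := by
  have := hc.neZero_length
  have hcast := ZMod.natCast_natAbs_valMinAbs (j - i)
  split_ifs at hcast
  · simpa [hcast] using hc.dist_cycleVert_add_natCast_le i (j - i).valMinAbs.natAbs
  · rw [dist_comm]
    simpa [hcast] using hc.dist_cycleVert_add_natCast_le j (j - i).valMinAbs.natAbs

end SimpleGraph.Walk

namespace IsCactus

open Walk

variable {G : SimpleGraph V} {v : V} {c : G.Walk v v}

theorem eq_of_walk_off_cycle (hG : IsCactus G) (hc : c.IsCycle) {x y : V}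
    (hx : x ∈ c.support) (hy : y ∈ c.support) (p : G.Walk x y)
    (hsupp : ∀ z ∈ p.support, z ∈ c.support → z = x ∨ z = y)
    (hedges : ∀ e ∈ p.edges, e ∉ c.edges) : x = y := by
  classical
  by_contra hxy
  obtain ⟨P, hP, hPsupp, hPedges⟩ : ∃ P : G.Walk x y, P.IsPath ∧
      (∀ z ∈ P.support, z ∈ c.support → z = x ∨ z = y) ∧
      ∀ e ∈ P.edges, e ∉ c.edges :=
    ⟨p.bypass, bypass_isPath p, fun z hz => hsupp z (p.support_bypass_subset_support hz),
      fun e he => hedges e (p.edges_bypass_subset_edges he)⟩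
  obtain ⟨Q, hQ, hQsupp, hQedges⟩ := c.exists_isPath_of_mem_support hy hx
  -- `P` and the arc `Q` of `c` close a cycle through both `x` and `y` that is not `c`.
  have hPQ : (P.append Q).IsCycle := by
    refine hP.isCycle_append hQ (fun z hzP hzQ => ?_) ?_
    · have hPnd := hP.support_nodup
      have hQnd := hQ.support_nodup
      rw [← cons_tail_support] at hPnd hQnd
      rcases hPsupp z (List.mem_of_mem_tail hzP) (hQsupp z (List.mem_of_mem_tail hzQ))
        with rfl | rfl
      · exact (List.nodup_cons.mp hPnd).1 hzP
      · exact (List.nodup_cons.mp hQnd).1 hzQ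
    · by_contra! hlen
      have hPlen : P.length = 1 := by
        have := length_eq_zero_iff.not.mpr (not_nil_of_ne (p := P) hxy); omega
      have hQlen : Q.length = 1 := by
        have := length_eq_zero_iff.not.mpr (not_nil_of_ne (p := Q) (Ne.symm hxy)); omega
      exact hPedges _ (mk_mem_edges_of_length_eq_one hPlen)
        (Sym2.eq_swap ▸ hQedges _ (mk_mem_edges_of_length_eq_one hQlen))
  have hPne : s(x, P.snd) ∈ P.edges := mk_start_snd_mem_edges (not_nil_of_ne hxy)
  have hne : {e | e ∈ c.edges} ≠ {e | e ∈ (P.append Q).edges} := by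
    intro h
    refine hPedges _ hPne (?_ : _ ∈ {e | e ∈ c.edges})
    rw [h, Set.mem_ofPred_eq, edges_append]
    exact List.mem_append_left _ hPne
  refine (hG.2 v x c (P.append Q) hc hPQ hne).not_gt <|
    (Set.one_lt_ncard (c.support.finite_toSet.subset fun z hz => hz.1)).mpr ?_
  exact ⟨x, ⟨hx, start_mem_support _⟩, y,
    ⟨hy, (mem_support_append_iff _ _).mpr (Or.inl P.end_mem_support)⟩, hxy⟩

theorem eq_of_walks_first_mem (hG : IsCactus G) (hc : c.IsCycle) {w x y : V}
    (hx : x ∈ c.support) (hy : y ∈ c.support) (p : G.Walk w x) (q : G.Walk w y)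
    (hp : ∀ z ∈ p.support, z ∈ c.support → z = x)
    (hq : ∀ z ∈ q.support, z ∈ c.support → z = y) :
    x = y := by
  refine hG.eq_of_walk_off_cycle hc hx hy (p.reverse.append q) (fun z hz hzc => ?_)
    fun e he => ?_
  · rw [mem_support_append_iff, support_reverse, List.mem_reverse] at hz
    exact hz.imp (hp z · hzc) (hq z · hzc)
  · rw [edges_append, edges_reverse, List.mem_append, List.mem_reverse] at he
    exact he.elim (notMem_edges_of_forall_mem_support_eq hp)
      (notMem_edges_of_forall_mem_support_eq hq)

theorem natAbs_valMinAbs_sub_le_one_of_walk_off_cycle (hG : IsCactus G) (hc : c.IsCycle)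
    {i j : ZMod c.length} (p : G.Walk (c.cycleVert i) (c.cycleVert j))
    (hp : ∀ z ∈ p.support, z ∈ c.support → z = c.cycleVert i ∨ z = c.cycleVert j) :
    (j - i).valMinAbs.natAbs ≤ 1 := by
  obtain ⟨e, hep, hec⟩ | hedges := em (∃ e ∈ p.edges, e ∈ c.edges)
  swap
  · have hij := hc.cycleVert_injective <| hG.eq_of_walk_off_cycle hc (cycleVert_mem_support i)
      (cycleVert_mem_support j) p hp fun e he hec => hedges ⟨e, he, hec⟩
    simp [hij]
  obtain ⟨t, rfl⟩ := hc.mem_edges_iff.mp hec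
  have ht := hp _ (p.fst_mem_support_of_mem_edges hep) (cycleVert_mem_support t)
  have ht1 := hp _ (p.snd_mem_support_of_mem_edges hep) (cycleVert_mem_support (t + 1))
  rw [hc.cycleVert_injective.eq_iff, hc.cycleVert_injective.eq_iff] at ht ht1
  rcases ht with rfl | rfl <;> rcases ht1 with h | h
  · exact absurd h (hc.self_ne_add_one _).symm
  · rw [← h, add_sub_cancel_left]; exact ZMod.natAbs_valMinAbs_one_le
  · rw [← h, sub_add_cancel_left, ZMod.natAbs_valMinAbs_neg]; exact ZMod.natAbs_valMinAbs_one_le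
  · exact absurd h (hc.self_ne_add_one _).symm

theorem natAbs_valMinAbs_sub_le_length (hG : IsCactus G) (hc : c.IsCycle) {i j : ZMod c.length}
    (p : G.Walk (c.cycleVert i) (c.cycleVert j)) : (j - i).valMinAbs.natAbs ≤ p.length := by
  induction hn : p.length using Nat.strong_induction_on generalizing i p with
  | _ n ih =>
  -- Cut `p` where it first returns to `c`: up to there it moves at most one step along `c`.
  by_cases hnil : p.Nil
  · simp [hc.cycleVert_injective hnil.eq]
  obtain ⟨z, hadj, p', rfl⟩ := not_nil_iff.mp hnil
  obtain ⟨y, hy, q, r, rfl, hq⟩ :=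
    exists_eq_append_first_mem {z | z ∈ c.support} p' (cycleVert_mem_support j)
  obtain ⟨a, rfl⟩ := hc.exists_cycleVert_eq hy
  have hstep : (a - i).valMinAbs.natAbs ≤ 1 := by
    refine hG.natAbs_valMinAbs_sub_le_one_of_walk_off_cycle hc (cons hadj q) fun x hx hxc => ?_
    rcases List.mem_cons.mp (support_cons hadj q ▸ hx) with rfl | hx
    · exact Or.inl rfl
    · exact Or.inr (hq x hx hxc)
  have hrest := ih r.length (by rw [← hn, length_cons, length_append]; omega) r rfl
  calc (j - i).valMinAbs.natAbs = ((j - a) + (a - i)).valMinAbs.natAbs := by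
        rw [sub_add_sub_cancel]
    _ ≤ (j - a).valMinAbs.natAbs + (a - i).valMinAbs.natAbs :=
        ZMod.natAbs_valMinAbs_add_le_add _ _
    _ ≤ n := by rw [← hn, length_cons, length_append]; omega

theorem dist_cycleVert (hG : IsCactus G) (hc : c.IsCycle) (i j : ZMod c.length) :
    G.dist (c.cycleVert i) (c.cycleVert j) = (j - i).valMinAbs.natAbs := by
  obtain ⟨p, hp⟩ := hG.1.exists_walk_length_eq_dist (c.cycleVert i) (c.cycleVert j)
  exact (hc.dist_cycleVert_le i j).antisymm (hp ▸ hG.natAbs_valMinAbs_sub_le_length hc p)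

theorem exists_dist_cycleVert_eq (hG : IsCactus G) (hc : c.IsCycle) (w : V) :
    ∃ g, ∀ i, G.dist w (c.cycleVert i) =
      G.dist w (c.cycleVert g) + (i - g).valMinAbs.natAbs := by
  obtain ⟨y, hy, q, -, -, hq⟩ := exists_eq_append_first_mem {z | z ∈ c.support}
    (hG.1.preconnected w v).some c.start_mem_support
  obtain ⟨g, rfl⟩ := hc.exists_cycleVert_eq hy
  -- Every walk from `w` to `c` first meets `c` at `cycleVert g`, by `eq_of_walks_first_mem`.
  refine ⟨g, fun i => le_antisymm ?_ ?_⟩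
  · exact (hG.1.dist_triangle).trans_eq (by rw [hG.dist_cycleVert hc])
  obtain ⟨p, hp⟩ := hG.1.exists_walk_length_eq_dist w (c.cycleVert i)
  obtain ⟨y', hy', q', r', rfl, hq'⟩ :=
    exists_eq_append_first_mem {z | z ∈ c.support} p (cycleVert_mem_support i)
  obtain rfl := hG.eq_of_walks_first_mem hc hy' hy q' q hq' hq
  rw [← hp, length_append, ← hG.dist_cycleVert hc]
  exact add_le_add (dist_le q') (dist_le r')

end IsCactus

lemma nclose_eq_card [Fintype V] (G : SimpleGraph V) (x y : V) :
    nclose G x y = #{w | w ≠ x ∧ w ≠ y ∧ G.dist w x < G.dist w y} := by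
  rw [nclose, Nat.card_eq_fintype_card, Fintype.card_subtype]
  rfl

lemma PIedge_add_card_dist_eq [Fintype V] {G : SimpleGraph V} {x y : V} (hxy : G.Adj x y) :
    PIedge G s(x, y) + #{w | G.dist w x = G.dist w y} = Fintype.card V - 2 := by
  have hoff : #{w | w ≠ x ∧ w ≠ y} = Fintype.card V - 2 := by
    rw [show ({w | w ≠ x ∧ w ≠ y} : Finset V) = (univ.erase x).erase y by
        ext; simp [and_comm],
      card_erase_of_mem (by simpa using hxy.ne.symm), card_erase_of_mem (mem_univ x), card_univ,
      Nat.sub_sub]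
  have hxy' : G.dist x y = 1 := dist_eq_one_iff_adj.mpr hxy
  have hyx : G.dist y x = 1 := dist_eq_one_iff_adj.mpr hxy.symm
  rw [← hoff, PIedge, Sym2.lift_mk]
  simp only [nclose_eq_card, card_filter, ← sum_add_distrib]
  refine sum_congr rfl fun w _ => ?_
  by_cases hwx : w = x
  · subst hwx; simp [hxy']
  by_cases hwy : w = y
  · subst hwy; simp [hyx]
  simp only [hwx, hwy, Ne, not_false_eq_true, true_and]
  split_ifs <;> omega

theorem stmt_11 [Fintype V] (G : SimpleGraph V) (hG : IsCactus G)
    (v : V) (c : G.Walk v v) (hc : c.IsCycle) (hodd : Odd c.length) :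
    ∑ e ∈ c.edges.toFinset, PIedge G e =
      (Fintype.card V - 2) * (c.length - 1) - 2 := by
  have := hc.neZero_length
  obtain ⟨h, hk⟩ := hodd
  choose g hg using hG.exists_dist_cycleVert_eq hc
  -- `w` is equidistant from the ends of the edge at `i` iff that edge is opposite its gate `g w`.
  have hPI (i : ZMod c.length) :
      PIedge G s(c.cycleVert i, c.cycleVert (i + 1)) + #{w | g w + h = i} = Fintype.card V - 2 := by
    rw [← PIedge_add_card_dist_eq (hc.adj_cycleVert i)]
    congr 2
    ext w
    simp only [mem_filter, mem_univ, true_and]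
    rw [hg w i, hg w (i + 1), add_right_inj, show i + 1 - g w = i - g w + 1 by ring,
      eq_comm (a := (i - g w).valMinAbs.natAbs), ZMod.natAbs_valMinAbs_add_one_eq_iff hk,
      sub_eq_iff_eq_add', eq_comm]
  have hfib : ∑ i, #{w | g w + h = i} = Fintype.card V :=
    (card_eq_sum_card_fiberwise fun w _ => mem_univ (g w + h)).symm
  have hsum : ∑ e ∈ c.edges.toFinset, PIedge G e + ∑ i, #{w | g w + h = i} =
      c.length * (Fintype.card V - 2) := by
    rw [hc.sum_edges_toFinset, ← sum_add_distrib, sum_congr rfl fun i _ => hPI i,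
      sum_const, card_univ, ZMod.card, smul_eq_mul]
  rw [hfib, hk, show (2 * h + 1) * (Fintype.card V - 2) =
    (Fintype.card V - 2) * (2 * h) + (Fintype.card V - 2) by ring] at hsum
  have hcard : 1 < Fintype.card V := Fintype.one_lt_card_iff.mpr ⟨_, _, (hc.adj_cycleVert 0).ne⟩
  rw [hk, Nat.add_sub_cancel]
  omega
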